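/- For η ~ N(μ, σ²) with σ > 0, the expected value of max(0, η) equals σ·p(μ/σ) + μ·P(μ/σ), where p and P are the PDF and CDF of the standard normal distribution. -/

import Mathlib

open MeasureTheory ProbabilityTheory Real

noncomputable def stdPdf (x : ℝ) : ℝ := (Real.sqrt (2 * Real.pi))⁻¹ * Real.exp (-x ^ 2 / 2)

noncomputable def stdCdf (x : ℝ) : ℝ := ∫ t in Set.Iic x, stdPdf t

noncomputable def phiTilde (μ σ : ℝ) : ℝ := σ * stdPdf (μ / σ) + μ * stdCdf (μ / σ)

/-!
Write `η = σ Z + μ` with `Z` standard normal. Then `max 0 η` vanishes exactly for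
`Z ≤ -μ/σ`, so `E[max 0 η] = σ ∫_{-μ/σ}^∞ z p(z) dz + μ ∫_{-μ/σ}^∞ p(z) dz`.
Since `p' = -z p`, the first integral is `p(-μ/σ) = p(μ/σ)`, and by the symmetry of `p`
the second is `P(μ/σ)`.
-/

open Set Filter Topology

lemma gaussianPDFReal_zero_one : gaussianPDFReal 0 1 = stdPdf := by
  ext x
  simp [gaussianPDFReal, stdPdf]

lemma integrable_stdPdf : Integrable stdPdf :=
  gaussianPDFReal_zero_one ▸ integrable_gaussianPDFReal 0 1

lemma integrable_mul_stdPdf : Integrable fun x ↦ x * stdPdf x := by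
  convert (integrable_mul_exp_neg_mul_sq (b := 1 / 2) (by norm_num)).const_mul
    (√(2 * π))⁻¹ using 2 with x
  simp only [stdPdf]
  ring_nf

lemma stdPdf_neg (x : ℝ) : stdPdf (-x) = stdPdf x := by
  simp [stdPdf]

lemma hasDerivAt_stdPdf (x : ℝ) : HasDerivAt stdPdf (-(x * stdPdf x)) x := by
  have h : HasDerivAt (fun x : ℝ ↦ -x ^ 2 / 2) (-x) x :=
    (((hasDerivAt_pow 2 x).neg).div_const 2).congr_deriv (by push_cast; ring)
  exact ((h.exp).const_mul (√(2 * π))⁻¹).congr_deriv (by simp only [stdPdf]; ring)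

lemma tendsto_stdPdf_atTop : Tendsto stdPdf atTop (𝓝 0) := by
  have h : Tendsto (fun x : ℝ ↦ x ^ 2 / 2) atTop atTop :=
    (tendsto_pow_atTop two_ne_zero).atTop_div_const two_pos
  have := (tendsto_exp_neg_atTop_nhds_zero.comp h).const_mul (√(2 * π))⁻¹
  rw [mul_zero] at this
  refine this.congr fun x ↦ ?_
  simp only [stdPdf, Function.comp_apply, neg_div]

lemma integral_Ioi_mul_stdPdf (a : ℝ) : ∫ x in Ioi a, x * stdPdf x = stdPdf a := by
  have hderiv (x : ℝ) : HasDerivAt (fun x ↦ -stdPdf x) (x * stdPdf x) x := by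
    simpa using (hasDerivAt_stdPdf x).fun_neg
  have := integral_Ioi_of_hasDerivAt_of_tendsto
    (hderiv a).continuousAt.continuousWithinAt (fun x _ ↦ hderiv x)
    integrable_mul_stdPdf.integrableOn (by simpa using tendsto_stdPdf_atTop.neg)
  simpa using this

lemma integral_Ioi_neg_stdPdf (c : ℝ) : ∫ x in Ioi (-c), stdPdf x = stdCdf c := by
  rw [stdCdf, ← integral_comp_neg_Iic]
  simp [stdPdf_neg]

lemma gaussianReal_eq_map_affine (μ σ : ℝ) :
    gaussianReal μ (σ ^ 2).toNNReal = (gaussianReal 0 1).map (fun z ↦ σ * z + μ) := by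
  change _ = (gaussianReal 0 1).map ((· + μ) ∘ (σ * ·))
  rw [← Measure.map_map (by fun_prop) (by fun_prop), gaussianReal_map_const_mul,
    gaussianReal_map_add_const, mul_zero, zero_add]
  congr 1
  ext
  simp [sq_nonneg]

lemma integral_gaussianReal_zero_one {E : Type*} [NormedAddCommGroup E] [NormedSpace ℝ E]
    (f : ℝ → E) : ∫ x, f x ∂gaussianReal 0 1 = ∫ x, stdPdf x • f x := by
  simp [integral_gaussianReal_eq_integral_smul one_ne_zero, gaussianPDFReal_zero_one]

lemma max_zero_affine_eq_indicator {σ : ℝ} (hσ : 0 < σ) (μ x : ℝ) :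
    max 0 (σ * x + μ) = (Ioi (-(μ / σ))).indicator (fun x ↦ σ * x + μ) x := by
  have h : x ∈ Ioi (-(μ / σ)) ↔ 0 < σ * x + μ := by
    rw [mem_Ioi, neg_lt_iff_pos_add, ← mul_lt_mul_iff_of_pos_left hσ]
    field_simp
    constructor <;> intro h <;> linarith
  by_cases hx : 0 < σ * x + μ
  · rw [indicator_of_mem (h.2 hx), max_eq_right hx.le]
  · rw [indicator_of_notMem (mt h.1 hx), max_eq_left (not_lt.1 hx)]

theorem expected_relu_gaussian (μ σ : ℝ) (hσ : 0 < σ) :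
    ∫ x, max 0 x ∂(gaussianReal μ (Real.toNNReal (σ ^ 2))) =
      σ * stdPdf (μ / σ) + μ * stdCdf (μ / σ) := by
  rw [gaussianReal_eq_map_affine, integral_map (by fun_prop) (by fun_prop),
    integral_gaussianReal_zero_one]
  simp_rw [smul_eq_mul, max_zero_affine_eq_indicator hσ, ← indicator_mul_right]
  rw [integral_indicator measurableSet_Ioi]
  calc ∫ x in Ioi (-(μ / σ)), stdPdf x * (σ * x + μ)
      = σ * (∫ x in Ioi (-(μ / σ)), x * stdPdf x) + μ * ∫ x in Ioi (-(μ / σ)), stdPdf x := by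
        rw [← integral_const_mul, ← integral_const_mul, ← integral_add
          (integrable_mul_stdPdf.integrableOn.const_mul σ)
          (integrable_stdPdf.integrableOn.const_mul μ)]
        congr 1 with x
        ring
    _ = σ * stdPdf (μ / σ) + μ * stdCdf (μ / σ) := by
        rw [integral_Ioi_mul_stdPdf, stdPdf_neg, integral_Ioi_neg_stdPdf]
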